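/- arXiv:2605.18538 — 5 statements merged into one kernel-verified Lean document; each statement's English description precedes it below -/
import Mathlib

section
/- Let H be the subring of the rational quaternions ℍ[ℚ] generated by i, j, and the element (1 + i + j + k)/2 (the Hurwitz order). Then the set {x : ℍ[ℚ] | x ∈ H ∧ normSq x = 1} has exactly 24 elements. -/
/-!
In the `ℤ`-basis `1, i, j, ω` of the Hurwitz order, `a + b i + c j + d ω` has norm
`((2a + d)² + (2b + d)² + (2c + d)² + d²) / 4`. Norm one thus confines all four coordinates to
`[-2, 2]`, and the unit shell is in bijection with the 24 solutions of
`(2a + d)² + (2b + d)² + (2c + d)² + d² = 4` in that box.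
-/

open Quaternion

namespace Hurwitz

/-- `ofCoords (a, b, c, d) = a + b i + c j + d ω`, where `ω = (1 + i + j + k) / 2`. -/
def ofCoords (v : ℤ × ℤ × ℤ × ℤ) : ℍ[ℚ] :=
  ⟨v.1 + v.2.2.2 / 2, v.2.1 + v.2.2.2 / 2, v.2.2.1 + v.2.2.2 / 2, v.2.2.2 / 2⟩

@[simp] theorem re_ofCoords (a b c d : ℤ) : (ofCoords (a, b, c, d)).re = a + d / 2 := rfl
@[simp] theorem imI_ofCoords (a b c d : ℤ) : (ofCoords (a, b, c, d)).imI = b + d / 2 := rfl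
@[simp] theorem imJ_ofCoords (a b c d : ℤ) : (ofCoords (a, b, c, d)).imJ = c + d / 2 := rfl
@[simp] theorem imK_ofCoords (a b c d : ℤ) : (ofCoords (a, b, c, d)).imK = d / 2 := rfl

theorem ofCoords_injective : Function.Injective ofCoords := by
  rintro ⟨a, b, c, d⟩ ⟨p, q, r, s⟩ h
  obtain ⟨h₁, h₂, h₃, h₄⟩ := Quaternion.ext_iff.mp h
  simp only [re_ofCoords, imI_ofCoords, imJ_ofCoords, imK_ofCoords] at h₁ h₂ h₃ h₄
  have hds : d = s := by exact_mod_cast (div_left_inj' two_ne_zero).mp h₄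
  subst hds
  simp_all

theorem ofCoords_add (v w : ℤ × ℤ × ℤ × ℤ) : ofCoords (v + w) = ofCoords v + ofCoords w := by
  obtain ⟨a, b, c, d⟩ := v
  obtain ⟨p, q, r, s⟩ := w
  ext <;> simp only [Prod.mk_add_mk, re_add, imI_add, imJ_add, imK_add,
    re_ofCoords, imI_ofCoords, imJ_ofCoords, imK_ofCoords] <;> push_cast <;> ring

theorem ofCoords_neg (v : ℤ × ℤ × ℤ × ℤ) : ofCoords (-v) = -ofCoords v := by
  obtain ⟨a, b, c, d⟩ := v
  ext <;> simp only [Prod.neg_mk, re_neg, imI_neg, imJ_neg, imK_neg,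
    re_ofCoords, imI_ofCoords, imJ_ofCoords, imK_ofCoords] <;> push_cast <;> ring

theorem ofCoords_mul (a b c d p q r s : ℤ) :
    ofCoords (a, b, c, d) * ofCoords (p, q, r, s) =
      ofCoords (a*p - b*q - b*r - b*s + c*q - c*r - d*r - d*s,
        a*q + b*p - b*r + c*q + c*s + d*q - d*r,
        a*r - b*r - b*s + c*p + c*q + c*s + d*q,
        a*s + 2*b*r + b*s - 2*c*q - c*s + d*p - d*q + d*r + d*s) := by
  ext <;> simp only [re_mul, imI_mul, imJ_mul, imK_mul,
    re_ofCoords, imI_ofCoords, imJ_ofCoords, imK_ofCoords] <;> push_cast <;> ring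

theorem ofCoords_eq_add_mul (a b c d : ℤ) :
    ofCoords (a, b, c, d) =
      a + b * ofCoords (0, 1, 0, 0) + c * ofCoords (0, 0, 1, 0) + d * ofCoords (0, 0, 0, 1) := by
  ext <;> simp only [re_add, imI_add, imJ_add, imK_add, re_mul, imI_mul, imJ_mul, imK_mul,
    re_intCast, imI_intCast, imJ_intCast, imK_intCast,
    re_ofCoords, imI_ofCoords, imJ_ofCoords, imK_ofCoords] <;> push_cast <;> ring

def order : Subring ℍ[ℚ] where
  carrier := Set.range ofCoords
  one_mem' := ⟨(1, 0, 0, 0), by ext <;> simp⟩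
  zero_mem' := ⟨(0, 0, 0, 0), by ext <;> simp⟩
  add_mem' := by
    rintro _ _ ⟨v, rfl⟩ ⟨w, rfl⟩
    exact ⟨v + w, ofCoords_add v w⟩
  neg_mem' := by
    rintro _ ⟨v, rfl⟩
    exact ⟨-v, ofCoords_neg v⟩
  mul_mem' := by
    rintro _ _ ⟨⟨a, b, c, d⟩, rfl⟩ ⟨⟨p, q, r, s⟩, rfl⟩
    exact ⟨_, (ofCoords_mul a b c d p q r s).symm⟩

theorem order_eq_closure :
    order = Subring.closure {(⟨0, 1, 0, 0⟩ : ℍ[ℚ]), ⟨0, 0, 1, 0⟩, ⟨1/2, 1/2, 1/2, 1/2⟩} := by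
  have hi : ofCoords (0, 1, 0, 0) = ⟨0, 1, 0, 0⟩ := by ext <;> simp
  have hj : ofCoords (0, 0, 1, 0) = ⟨0, 0, 1, 0⟩ := by ext <;> simp
  have hω : ofCoords (0, 0, 0, 1) = ⟨1/2, 1/2, 1/2, 1/2⟩ := by ext <;> simp
  apply le_antisymm
  · rintro _ ⟨⟨a, b, c, d⟩, rfl⟩
    rw [ofCoords_eq_add_mul, hi, hj, hω]
    refine add_mem (add_mem (add_mem (intCast_mem _ a) ?_) ?_) ?_ <;>
      refine mul_mem (intCast_mem _ _) (Subring.subset_closure ?_)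
    exacts [Or.inl rfl, Or.inr (Or.inl rfl), Or.inr (Or.inr rfl)]
  · refine Subring.closure_le.mpr ?_
    rintro x (rfl | rfl | rfl)
    exacts [⟨_, hi⟩, ⟨_, hj⟩, ⟨_, hω⟩]

def normForm : ℤ × ℤ × ℤ × ℤ → ℤ
  | (a, b, c, d) => (2*a + d)^2 + (2*b + d)^2 + (2*c + d)^2 + d^2

theorem four_mul_normSq_ofCoords (v : ℤ × ℤ × ℤ × ℤ) :
    4 * normSq (ofCoords v) = normForm v := by
  obtain ⟨a, b, c, d⟩ := v
  rw [normSq_def', re_ofCoords, imI_ofCoords, imJ_ofCoords, imK_ofCoords, normForm]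
  push_cast
  ring

noncomputable def unitCoords : Finset (ℤ × ℤ × ℤ × ℤ) :=
  {v ∈ Finset.Icc (-2) 2 ×ˢ Finset.Icc (-2) 2 ×ˢ Finset.Icc (-2) 2 ×ˢ Finset.Icc (-2) 2 |
    normForm v = 4}

theorem card_unitCoords : unitCoords.card = 24 := by decide

theorem mem_unitCoords {v : ℤ × ℤ × ℤ × ℤ} : v ∈ unitCoords ↔ normForm v = 4 := by
  obtain ⟨a, b, c, d⟩ := v
  simp only [unitCoords, Finset.mem_filter, Finset.mem_product, Finset.mem_Icc,
    and_iff_right_iff_imp]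
  intro h
  simp only [normForm] at h
  have bound (x : ℤ) (hx : x ^ 2 ≤ 2 ^ 2) : -2 ≤ x ∧ x ≤ 2 := abs_le_of_sq_le_sq' hx zero_le_two
  have hd := bound d (by linarith [sq_nonneg (2*a + d), sq_nonneg (2*b + d), sq_nonneg (2*c + d)])
  have ha := bound (2*a + d) (by linarith [sq_nonneg d, sq_nonneg (2*b + d), sq_nonneg (2*c + d)])
  have hb := bound (2*b + d) (by linarith [sq_nonneg d, sq_nonneg (2*a + d), sq_nonneg (2*c + d)])
  have hc := bound (2*c + d) (by linarith [sq_nonneg d, sq_nonneg (2*a + d), sq_nonneg (2*b + d)])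
  omega

theorem normSq_ofCoords_eq_one_iff {v : ℤ × ℤ × ℤ × ℤ} :
    normSq (ofCoords v) = 1 ↔ v ∈ unitCoords := by
  rw [mem_unitCoords, ← (mul_right_injective₀ (four_ne_zero (α := ℚ))).eq_iff,
    four_mul_normSq_ofCoords]
  norm_cast

theorem unitShell_eq_image :
    {x : ℍ[ℚ] | x ∈ order ∧ normSq x = 1} = ofCoords '' unitCoords := by
  ext x
  constructor
  · rintro ⟨⟨v, rfl⟩, hv⟩
    exact ⟨v, normSq_ofCoords_eq_one_iff.mp hv, rfl⟩
  · rintro ⟨v, hv, rfl⟩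
    exact ⟨⟨v, rfl⟩, normSq_ofCoords_eq_one_iff.mpr hv⟩

end Hurwitz

/-- The unit shell of the Hurwitz order (the subring of the rational
quaternions generated by `i`, `j` and `(1 + i + j + k)/2`) has exactly 24
elements: the `D₄` root system, the 24-cell. -/
theorem hurwitz_unit_shell :
    ∀ H : Subring (Quaternion ℚ),
      H = Subring.closure {(⟨0, 1, 0, 0⟩ : Quaternion ℚ), ⟨0, 0, 1, 0⟩,
            ⟨1/2, 1/2, 1/2, 1/2⟩} →
      {x : Quaternion ℚ | x ∈ H ∧ Quaternion.normSq x = 1}.ncard = 24 := by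
  rintro H rfl
  rw [← Hurwitz.order_eq_closure, Hurwitz.unitShell_eq_image,
    Set.ncard_image_of_injective _ Hurwitz.ofCoords_injective, Set.ncard_coe_finset,
    Hurwitz.card_unitCoords]
end

section
/- The set of vectors v : Fin 8 → ℚ such that (either every coordinate v i is an integer, or every coordinate v i − 1/2 is an integer), the coordinate sum ∑ i, v i is an even integer, and ∑ i, (v i)² = 2, has exactly 240 elements. -/
/-!
Doubling a vector clears its denominators: `v` is a root iff `w = 2v` is an integer vector
whose coordinates all have the same parity, with `4 ∣ ∑ wᵢ` and `∑ wᵢ² = 8`. The last condition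
bounds every coordinate, `wᵢ² ≤ 8`, so `w` lies in `{-2, 0, 2}⁸` (even case: twice the 112
roots `±eᵢ ± eⱼ`) or in `{-1, 1}⁸` (odd case: the 128 sign vectors with an even number of minus
signs), and both finite sets are counted by evaluation.
-/

open Finset

section Halve

variable {ι : Type*}

def halve (w : ι → ℤ) : ι → ℚ := fun i => (w i : ℚ) / 2

lemma halve_injective : Function.Injective (halve : (ι → ℤ) → ι → ℚ) := by
  intro w w' h
  funext i
  have := congrFun h i
  simp only [halve] at this
  exact_mod_cast (div_left_inj' two_ne_zero).mp this

variable [Fintype ι]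

lemma sum_halve_eq_two_mul_iff (w : ι → ℤ) (m : ℤ) :
    ∑ i, halve w i = 2 * m ↔ ∑ i, w i = 4 * m := by
  simp only [halve, ← sum_div]
  rw [div_eq_iff two_ne_zero, ← Int.cast_sum,
    show (2 : ℚ) * m * 2 = ((4 * m : ℤ) : ℚ) by push_cast; ring, Int.cast_inj]

lemma exists_sum_halve_eq_two_mul_iff (w : ι → ℤ) :
    (∃ m : ℤ, ∑ i, halve w i = 2 * m) ↔ 4 ∣ ∑ i, w i := by
  simp only [sum_halve_eq_two_mul_iff]
  rfl

lemma sum_sq_halve_eq_two_iff (w : ι → ℤ) :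
    ∑ i, halve w i ^ 2 = 2 ↔ ∑ i, w i ^ 2 = 8 := by
  simp only [halve, div_pow, ← sum_div]
  rw [div_eq_iff (by norm_num)]
  exact_mod_cast Iff.rfl

end Halve

lemma exists_int_eq_intCast_div_two_iff (k : ℤ) :
    (∃ n : ℤ, (k : ℚ) / 2 = n) ↔ Even k := by
  constructor
  · rintro ⟨n, hn⟩
    exact ⟨n, by exact_mod_cast (by linarith : (k : ℚ) = n + n)⟩
  · rintro ⟨n, rfl⟩
    exact ⟨n, by push_cast; ring⟩

lemma exists_int_eq_intCast_div_two_sub_half_iff (k : ℤ) :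
    (∃ n : ℤ, (k : ℚ) / 2 - 1 / 2 = n) ↔ Odd k := by
  constructor
  · rintro ⟨n, hn⟩
    exact ⟨n, by exact_mod_cast (by linarith : (k : ℚ) = 2 * n + 1)⟩
  · rintro ⟨n, rfl⟩
    exact ⟨n, by push_cast; ring⟩

lemma Int.mem_of_even_of_sq_le {k : ℤ} (hk : Even k) (h : k ^ 2 ≤ 8) :
    k ∈ ({-2, 0, 2} : Finset ℤ) := by
  obtain ⟨n, rfl⟩ := hk
  have : -1 ≤ n ∧ n ≤ 1 := ⟨by nlinarith, by nlinarith⟩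
  simp only [mem_insert, mem_singleton]
  omega

lemma Int.mem_of_odd_of_sq_le {k : ℤ} (hk : Odd k) (h : k ^ 2 ≤ 8) :
    k ∈ ({-1, 1} : Finset ℤ) := by
  obtain ⟨n, rfl⟩ := hk
  have : -1 ≤ n ∧ n ≤ 0 := ⟨by nlinarith, by nlinarith⟩
  simp only [mem_insert, mem_singleton]
  omega

def e8Roots : Set (Fin 8 → ℚ) :=
  {v | ((∀ i, ∃ n : ℤ, v i = n) ∨ (∀ i, ∃ n : ℤ, v i - 1/2 = n)) ∧
    (∃ m : ℤ, ∑ i, v i = 2 * m) ∧ ∑ i, v i ^ 2 = 2}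

def doubledE8Roots : Set (Fin 8 → ℤ) :=
  {w | ((∀ i, Even (w i)) ∨ (∀ i, Odd (w i))) ∧ 4 ∣ ∑ i, w i ∧ ∑ i, w i ^ 2 = 8}

lemma e8Roots_subset_range_halve : e8Roots ⊆ Set.range halve := by
  rintro v ⟨hint | hhalf, -⟩
  · choose n hn using hint
    exact ⟨fun i => 2 * n i, funext fun i => by simp [halve, hn]⟩
  · choose n hn using hhalf
    exact ⟨fun i => 2 * n i + 1, funext fun i => by simp [halve]; linarith [hn i]⟩

lemma halve_preimage_e8Roots : halve ⁻¹' e8Roots = doubledE8Roots := by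
  ext w
  simp only [e8Roots, doubledE8Roots, Set.mem_preimage, Set.mem_ofPred_eq,
    exists_sum_halve_eq_two_mul_iff, sum_sq_halve_eq_two_iff]
  simp only [halve, exists_int_eq_intCast_div_two_iff, exists_int_eq_intCast_div_two_sub_half_iff]

def evenDoubledE8Roots : Finset (Fin 8 → ℤ) :=
  (Fintype.piFinset fun _ => {-2, 0, 2}).filter fun w => 4 ∣ ∑ i, w i ∧ ∑ i, w i ^ 2 = 8

def oddDoubledE8Roots : Finset (Fin 8 → ℤ) :=
  (Fintype.piFinset fun _ => {-1, 1}).filter fun w => 4 ∣ ∑ i, w i ∧ ∑ i, w i ^ 2 = 8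

lemma doubledE8Roots_eq_union :
    doubledE8Roots = ↑(evenDoubledE8Roots ∪ oddDoubledE8Roots) := by
  ext w
  simp only [doubledE8Roots, evenDoubledE8Roots, oddDoubledE8Roots, Set.mem_ofPred_eq, coe_union,
    coe_filter, Fintype.mem_piFinset, Set.mem_union]
  have hsq : ∀ i, w i ^ 2 ≤ ∑ j, w j ^ 2 := fun i =>
    single_le_sum (fun j _ => sq_nonneg (w j)) (mem_univ i)
  constructor
  · rintro ⟨heven | hodd, hroot⟩
    · exact .inl ⟨fun i => Int.mem_of_even_of_sq_le (heven i) (hroot.2 ▸ hsq i), hroot⟩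
    · exact .inr ⟨fun i => Int.mem_of_odd_of_sq_le (hodd i) (hroot.2 ▸ hsq i), hroot⟩
  · rintro (⟨hmem, hroot⟩ | ⟨hmem, hroot⟩)
    · refine ⟨.inl fun i => ?_, hroot⟩
      have := hmem i
      simp only [mem_insert, mem_singleton] at this
      rcases this with h | h | h <;> simp [h]
    · refine ⟨.inr fun i => ?_, hroot⟩
      have := hmem i
      simp only [mem_insert, mem_singleton] at this
      rcases this with h | h <;> simp [h]

lemma card_evenDoubledE8Roots : #evenDoubledE8Roots = 112 := by decide +kernel

lemma card_oddDoubledE8Roots : #oddDoubledE8Roots = 128 := by decide +kernel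

lemma disjoint_evenDoubledE8Roots_oddDoubledE8Roots :
    Disjoint evenDoubledE8Roots oddDoubledE8Roots := by
  refine disjoint_left.mpr fun w heven hodd => ?_
  simp only [evenDoubledE8Roots, oddDoubledE8Roots, mem_filter, Fintype.mem_piFinset,
    mem_insert, mem_singleton] at heven hodd
  have h₀even := heven.1 0
  have h₀odd := hodd.1 0
  omega

/-- The `E₈` root system in the even coordinate system: vectors in `ℚ⁸` whose
coordinates are all integers or all half-odd-integers, with even coordinate
sum and squared length 2; there are exactly 240 of them. -/
theorem e8_roots_card :
    {v : Fin 8 → ℚ |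
        ((∀ i, ∃ n : ℤ, v i = n) ∨ (∀ i, ∃ n : ℤ, v i - 1/2 = n)) ∧
        (∃ m : ℤ, ∑ i, v i = 2 * m) ∧
        ∑ i, (v i) ^ 2 = 2}.ncard = 240 := by
  change e8Roots.ncard = 240
  rw [← Set.image_preimage_eq_of_subset e8Roots_subset_range_halve,
    Set.ncard_image_of_injective _ halve_injective, halve_preimage_e8Roots,
    doubledE8Roots_eq_union, Set.ncard_coe_finset,
    card_union_of_disjoint disjoint_evenDoubledE8Roots_oddDoubledE8Roots,
    card_evenDoubledE8Roots, card_oddDoubledE8Roots]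
end

section
/- Let K be the cyclotomic field ℚ(ζ₁₀) (CyclotomicField 10 ℚ) and 𝓞 its ring of integers. The set {z : 𝓞 | for every ring homomorphism σ : K →+* ℂ, ‖σ z‖ = 1} equals the set {z : 𝓞 | z^10 = 1} of 10th roots of unity, and it has exactly 10 elements. -/
/-!
By Kronecker's theorem an algebraic integer all of whose conjugates have absolute value 1 is a
root of unity, hence a torsion unit; conversely roots of unity have conjugates on the unit
circle. The torsion subgroup of `ℚ(ζₙ)` for even `n` is `μₙ`, and the primitive root `ζ₁₀` shows
that `X ^ 10 - 1` has exactly ten roots in `ℤ[ζ₁₀]`.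
-/

open NumberField Units Polynomial

theorem Set.ncard_pow_eq_one_of_isPrimitiveRoot {R : Type*} [CommRing R] [IsDomain R] {ζ : R}
    {n : ℕ} (hζ : IsPrimitiveRoot ζ n) (hn : 0 < n) : {x : R | x ^ n = 1}.ncard = n := by
  have hroots : {x : R | x ^ n = 1} = nthRootsFinset n (1 : R) := by
    ext x
    simp [mem_nthRootsFinset hn]
  rw [hroots, Set.ncard_coe_finset, hζ.card_nthRootsFinset]

theorem NumberField.RingOfIntegers.pow_torsionOrder_eq_one_iff_forall_norm_eq_one
    {K : Type*} [Field K] [NumberField K] (x : 𝓞 K) :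
    x ^ torsionOrder K = 1 ↔ ∀ φ : K →+* ℂ, ‖φ x‖ = 1 := by
  constructor
  · intro hx φ
    have hpow : ‖φ x‖ ^ torsionOrder K = 1 := by
      rw [← norm_pow, ← map_pow, ← map_pow, hx, map_one, map_one, norm_one]
    exact (pow_eq_one_iff_of_nonneg (norm_nonneg _) (torsionOrder_ne_zero K)).mp hpow
  · intro hx
    obtain ⟨n, hn, hxn⟩ := Embeddings.pow_eq_one_of_norm_eq_one K ℂ x.isIntegral_coe hx
    have hxn' : x ^ n = 1 := by exact_mod_cast hxn
    have hu : Units.ofPowEqOne x n hxn' hn.ne' ∈ torsion K :=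
      (CommGroup.mem_torsion _).mpr (isOfFinOrder_iff_pow_eq_one.mpr
        ⟨n, hn, Units.pow_ofPowEqOne hxn' hn.ne'⟩)
    rw [← rootsOfUnity_eq_torsion, mem_rootsOfUnity] at hu
    simpa using congrArg Units.val hu

/-- The unit shell of the ring of integers of `ℚ(ζ₁₀)`: the elements all of
whose complex embeddings have absolute value 1 are exactly the 10th roots of
unity, and there are exactly 10 of them (the decagon `H₂`). -/
theorem cyclotomic10_unit_shell :
    {z : 𝓞 (CyclotomicField 10 ℚ) |
        ∀ σ : CyclotomicField 10 ℚ →+* ℂ, ‖σ (z : CyclotomicField 10 ℚ)‖ = 1} =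
      {z : 𝓞 (CyclotomicField 10 ℚ) | z ^ 10 = 1} ∧
    {z : 𝓞 (CyclotomicField 10 ℚ) |
        ∀ σ : CyclotomicField 10 ℚ →+* ℂ,
          ‖σ (z : CyclotomicField 10 ℚ)‖ = 1}.ncard = 10 := by
  -- The library instance is stated for `CyclotomicField.algebra`, which instance search does not
  -- unify with the `ℚ`-algebra structure of a characteristic-zero field.
  have : IsCyclotomicExtension {10} ℚ (CyclotomicField 10 ℚ) :=
    CyclotomicField.isCyclotomicExtension 10 ℚ
  have htors : torsionOrder (CyclotomicField 10 ℚ) = 10 := by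
    rw [IsCyclotomicExtension.Rat.torsionOrder_eq (n := 10)]
    decide
  have hshell : {z : 𝓞 (CyclotomicField 10 ℚ) |
      ∀ σ : CyclotomicField 10 ℚ →+* ℂ, ‖σ (z : CyclotomicField 10 ℚ)‖ = 1} =
      {z | z ^ 10 = 1} := by
    ext z
    rw [Set.mem_ofPred_eq, Set.mem_ofPred_eq,
      ← RingOfIntegers.pow_torsionOrder_eq_one_iff_forall_norm_eq_one, htors]
  refine ⟨hshell, ?_⟩
  rw [hshell]
  exact Set.ncard_pow_eq_one_of_isPrimitiveRoot
    (IsCyclotomicExtension.zeta_spec 10 ℚ (CyclotomicField 10 ℚ)).toInteger_isPrimitiveRoot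
    (by norm_num)
end

section
/- Let K be the cyclotomic field ℚ(ζ₁₀) (CyclotomicField 10 ℚ) and 𝓞 its ring of integers. The set {p : 𝓞 × 𝓞 | for every ring homomorphism σ : K →+* ℂ, ‖σ p.1‖² + ‖σ p.2‖² = 1} equals the axis set {(x, 0) : x^10 = 1} ∪ {(0, y) : y^10 = 1}, and it has exactly 20 elements. -/
/-!
Over any number field `K` the shell lies on the two axes: if `x` and `y` are nonzero algebraic
integers, the norm of `x * y` is a nonzero integer, so some conjugate has `‖σ x‖ ‖σ y‖ ≥ 1`, and
there `‖σ x‖² + ‖σ y‖² ≥ 2` by AM–GM. On an axis the condition says that every conjugate of the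
coordinate has absolute value `1`, which by Kronecker's theorem makes it a root of unity, i.e. a
`w`-th root of unity for `w` the order of the torsion of `K`. So the shell has `2w` points, and
`w = 10` for `ℚ(ζ₁₀)` because `10` is even.
-/

open NumberField

namespace NumberField

open NumberField.Units

variable {K : Type*} [Field K] [NumberField K]

theorem RingOfIntegers.pow_torsionOrder_eq_one_of_pow_eq_one {x : 𝓞 K} {n : ℕ} (hn : n ≠ 0)
    (hx : x ^ n = 1) : x ^ torsionOrder K = 1 := by
  have hu : Units.ofPowEqOne x n hx hn ∈ torsion K :=
    (CommGroup.mem_torsion _).mpr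
      (isOfFinOrder_iff_pow_eq_one.mpr ⟨n, Nat.pos_of_ne_zero hn, Units.pow_ofPowEqOne hx hn⟩)
  rw [← rootsOfUnity_eq_torsion, mem_rootsOfUnity] at hu
  simpa using congrArg Units.val hu

theorem RingOfIntegers.pow_torsionOrder_eq_one_iff_forall_norm_eq_one_s10 {x : 𝓞 K} :
    x ^ torsionOrder K = 1 ↔ ∀ σ : K →+* ℂ, ‖σ x‖ = 1 := by
  refine ⟨fun hx σ ↦ Complex.norm_eq_one_of_pow_eq_one ?_ (torsionOrder_ne_zero K), fun hx ↦ ?_⟩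
  · rw [← map_pow, ← map_one σ]
    exact congrArg σ (by exact_mod_cast congrArg ((↑) : 𝓞 K → K) hx)
  · obtain ⟨n, hn, hxn⟩ := Embeddings.pow_eq_one_of_norm_eq_one K ℂ x.isIntegral_coe hx
    exact pow_torsionOrder_eq_one_of_pow_eq_one hn.ne' (RingOfIntegers.coe_injective (by simpa))

theorem exists_two_le_sq_norm_add_sq_norm {x y : 𝓞 K} (hx : x ≠ 0) (hy : y ≠ 0) :
    ∃ σ : K →+* ℂ, 2 ≤ ‖σ x‖ ^ 2 + ‖σ y‖ ^ 2 := by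
  obtain ⟨σ, hσ⟩ := exists_conjugate_one_le_norm (mul_ne_zero hx hy)
  push_cast at hσ
  rw [map_mul, norm_mul] at hσ
  exact ⟨σ, by nlinarith [sq_nonneg (‖σ x‖ - ‖σ y‖)]⟩

variable (K) in
def unitShell : Set (𝓞 K × 𝓞 K) :=
  {p | ∀ σ : K →+* ℂ, ‖σ p.1‖ ^ 2 + ‖σ p.2‖ ^ 2 = 1}

variable (K) in
theorem unitShell_eq : unitShell K =
    {p | p.1 ^ torsionOrder K = 1 ∧ p.2 = 0} ∪ {p | p.1 = 0 ∧ p.2 ^ torsionOrder K = 1} := by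
  ext ⟨x, y⟩
  simp only [unitShell, Set.mem_ofPred_eq, Set.mem_union]
  obtain rfl | hx := eq_or_ne x 0
  · simp [zero_pow (torsionOrder_ne_zero K), pow_eq_one_iff_of_nonneg (norm_nonneg _),
      RingOfIntegers.pow_torsionOrder_eq_one_iff_forall_norm_eq_one_s10]
  obtain rfl | hy := eq_or_ne y 0
  · simp [zero_pow (torsionOrder_ne_zero K), pow_eq_one_iff_of_nonneg (norm_nonneg _),
      RingOfIntegers.pow_torsionOrder_eq_one_iff_forall_norm_eq_one_s10]
  obtain ⟨σ, hσ⟩ := exists_two_le_sq_norm_add_sq_norm hx hy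
  simp only [hx, hy, and_false, false_and, or_false, iff_false, not_forall]
  exact ⟨σ, by linarith⟩

theorem ncard_setOf_pow_torsionOrder_eq_one :
    {x : 𝓞 K | x ^ torsionOrder K = 1}.ncard = torsionOrder K := by
  calc {x : 𝓞 K | x ^ torsionOrder K = 1}.ncard
      = Nat.card {x // x ∈ Polynomial.nthRoots (torsionOrder K) (1 : 𝓞 K)} := by
        simp_rw [Polynomial.mem_nthRoots (torsionOrder_pos K)]
        rfl
    _ = Nat.card (rootsOfUnity (torsionOrder K) (𝓞 K)) :=
        Nat.card_congr (rootsOfUnityEquivNthRoots _ _).symm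
    _ = torsionOrder K := by rw [rootsOfUnity_eq_torsion]; rfl

variable (K) in
theorem ncard_unitShell : (unitShell K).ncard = 2 * torsionOrder K := by
  have hdisj : Disjoint {p : 𝓞 K × 𝓞 K | p.1 ^ torsionOrder K = 1 ∧ p.2 = 0}
      {p | p.1 = 0 ∧ p.2 ^ torsionOrder K = 1} :=
    Set.disjoint_left.mpr fun p ⟨h1, _⟩ ⟨h0, _⟩ ↦ by
      simp [h0, zero_pow (torsionOrder_ne_zero K)] at h1
  have hfin : {x : 𝓞 K | x ^ torsionOrder K = 1}.Finite :=
    Set.finite_of_ncard_pos (by rw [ncard_setOf_pow_torsionOrder_eq_one]; exact torsionOrder_pos K)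
  rw [unitShell_eq K, Set.ncard_union_eq hdisj (hfin.prod (Set.finite_singleton 0))
    ((Set.finite_singleton 0).prod hfin)]
  change ({x : 𝓞 K | x ^ torsionOrder K = 1} ×ˢ {0}).ncard
    + ({0} ×ˢ {x : 𝓞 K | x ^ torsionOrder K = 1}).ncard = _
  rw [Set.ncard_prod, Set.ncard_prod, Set.ncard_singleton, ncard_setOf_pow_torsionOrder_eq_one]
  ring

theorem torsionOrder_cyclotomicField_ten : torsionOrder (CyclotomicField 10 ℚ) = 10 := by
  -- The library instance is stated for `CyclotomicField.algebra`, which agrees with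
  -- `DivisionRing.toRatAlgebra` only after unfolding.
  have : IsCyclotomicExtension {10} ℚ (CyclotomicField 10 ℚ) :=
    CyclotomicField.isCyclotomicExtension 10 ℚ
  rw [IsCyclotomicExtension.Rat.torsionOrder_eq (n := 10), if_pos (by decide)]

end NumberField

/-- The unit shell of the integral plane of `ℤ[ζ₁₀]` (pairs whose embedded
squared norms sum to 1 under every complex embedding) equals the axis set of
10th roots of unity, and has exactly 20 elements: the root-shell system
`H₂ ⊕ H₂`, the decagonal tegum. -/
theorem cyclotomic10_plane_shell :
    {p : 𝓞 (CyclotomicField 10 ℚ) × 𝓞 (CyclotomicField 10 ℚ) |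
        ∀ σ : CyclotomicField 10 ℚ →+* ℂ,
          ‖σ (p.1 : CyclotomicField 10 ℚ)‖ ^ 2 +
            ‖σ (p.2 : CyclotomicField 10 ℚ)‖ ^ 2 = 1} =
      ({p : 𝓞 (CyclotomicField 10 ℚ) × 𝓞 (CyclotomicField 10 ℚ) |
          p.1 ^ 10 = 1 ∧ p.2 = 0} ∪
       {p : 𝓞 (CyclotomicField 10 ℚ) × 𝓞 (CyclotomicField 10 ℚ) |
          p.1 = 0 ∧ p.2 ^ 10 = 1}) ∧
    {p : 𝓞 (CyclotomicField 10 ℚ) × 𝓞 (CyclotomicField 10 ℚ) |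
        ∀ σ : CyclotomicField 10 ℚ →+* ℂ,
          ‖σ (p.1 : CyclotomicField 10 ℚ)‖ ^ 2 +
            ‖σ (p.2 : CyclotomicField 10 ℚ)‖ ^ 2 = 1}.ncard = 20 := by
  have hshell := unitShell_eq (CyclotomicField 10 ℚ)
  have hcard := ncard_unitShell (CyclotomicField 10 ℚ)
  rw [torsionOrder_cyclotomicField_ten] at hshell hcard
  exact ⟨hshell, hcard⟩
end

section
/- For every positive integer m and all rationals q, r: if 2·cos(π/m) = q + r·√5, then m ≤ 6. In particular, among the dihedral angles π/m with m ≥ 5, only m = 5 yields a value of 2·cos(π/m) lying in the quadratic field ℚ(√5). -/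
/-!
`ζ = exp(iπ/m)` is a primitive `2m`-th root of unity with `ζ + ζ⁻¹ = 2 cos(π/m)`. If this equals
`q + r√5`, then `ζ` is a root of `X² - (q + r√5) X + 1`, and multiplying by the conjugate
quadratic gives the rational quartic `(X² - qX + 1)² - 5r²X²`. So the cyclotomic polynomial
`Φ_{2m}`, the minimal polynomial of `ζ` over `ℚ`, has degree `φ(2m) ≤ 4`, which forces `2m ≤ 12`.
-/

open Polynomial

namespace Nat

theorem Prime.sub_one_le_totient_of_dvd {p n : ℕ} (hp : p.Prime) (hn : 0 < n) (hpn : p ∣ n) :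
    p - 1 ≤ φ n :=
  totient_prime hp ▸ le_of_dvd (totient_pos.2 hn) (totient_dvd_of_dvd hpn)

theorem le_twelve_of_totient_le_four {n : ℕ} (h : φ n ≤ 4) : n ≤ 12 := by
  induction n using Nat.strong_induction_on with
  | _ n ih =>
    by_contra! hn
    have hp : n.minFac.Prime := minFac_prime (by omega)
    have hp5 : n.minFac ≤ 5 := by
      have := hp.sub_one_le_totient_of_dvd (by omega) (minFac_dvd n)
      omega
    obtain ⟨k, hk⟩ := minFac_dvd n
    have hk_lt : k < n := by
      have := hp.two_le
      rcases Nat.eq_zero_or_pos k with rfl | hk0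
      · omega
      · nlinarith
    have hk_tot : φ k ≤ 4 :=
      (le_of_dvd (totient_pos.2 (by omega)) (totient_dvd_of_dvd (Dvd.intro_left _ hk.symm))).trans h
    have hn60 : n ≤ 60 := hk ▸ Nat.mul_le_mul hp5 (ih k hk_lt hk_tot)
    interval_cases n <;> revert h <;> decide

end Nat

theorem IsPrimitiveRoot.natDegree_minpoly_rat {K : Type*} [Field K] [CharZero K] {ζ : K} {n : ℕ}
    (hζ : IsPrimitiveRoot ζ n) (hn : 0 < n) : (minpoly ℚ ζ).natDegree = Nat.totient n := by
  rw [← cyclotomic_eq_minpoly_rat hζ hn, natDegree_cyclotomic]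

theorem natDegree_minpoly_le_four_of_sq_sub_mul_add_one_eq_zero {K : Type*} [Field K] [CharZero K]
    {z t : K} {d q r : ℚ} (ht : t ^ 2 = d) (hz : z ^ 2 - (q + r * t) * z + 1 = 0) :
    (minpoly ℚ z).natDegree ≤ 4 := by
  set P : ℚ[X] := (X ^ 2 - C q * X + 1) ^ 2 - C (d * r ^ 2) * X ^ 2
  have hP_deg : P.natDegree = 4 := by simp only [P]; compute_degree!
  have hP_ne : P ≠ 0 := fun h0 => by simp [h0] at hP_deg
  have hPz : aeval z P = 0 := by
    simp only [P, map_sub, map_add, map_pow, map_mul, map_one, aeval_X, aeval_C, eq_ratCast]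
    linear_combination (z ^ 2 - q * z + 1 + r * t * z) * hz + r ^ 2 * z ^ 2 * ht
  exact hP_deg ▸ natDegree_le_natDegree (minpoly.degree_le_of_ne_zero ℚ z hP_ne hPz)

namespace Complex

theorem isPrimitiveRoot_exp_pi_div_mul_I {m : ℕ} (hm : m ≠ 0) :
    IsPrimitiveRoot (exp (Real.pi / m * I)) (2 * m) := by
  convert isPrimitiveRoot_exp (2 * m) (by positivity) using 2
  push_cast
  field_simp

theorem exp_mul_I_sq_sub_two_cos_mul_add_one (x : ℝ) :
    exp (x * I) ^ 2 - 2 * Real.cos x * exp (x * I) + 1 = 0 := by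
  have hinv : exp (x * I) * exp (-x * I) = 1 := by rw [← exp_add]; simp
  rw [ofReal_cos, two_cos]
  linear_combination -hinv

end Complex

/-- If `2 cos(π/m)` lies in the quadratic field `ℚ(√5)`, then `m ≤ 6`.  This is
the number-theoretic step excluding the dihedral systems `I₂(m)`, `m ≥ 7`,
from being root-shell systems over `ℤ[φ]`. -/
theorem two_cos_pi_div_in_sqrt5_imp_le_six :
    ∀ m : ℕ, 0 < m → ∀ q r : ℚ,
      2 * Real.cos (Real.pi / m) = (q : ℝ) + (r : ℝ) * Real.sqrt 5 → m ≤ 6 := by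
  intro m hm q r h
  have hζ := Complex.isPrimitiveRoot_exp_pi_div_mul_I hm.ne'
  have h_cos : 2 * (Real.cos (Real.pi / m) : ℂ) = q + r * (Real.sqrt 5 : ℂ) := by
    exact_mod_cast h
  have hroot := Complex.exp_mul_I_sq_sub_two_cos_mul_add_one (Real.pi / m)
  rw [h_cos] at hroot
  push_cast at hroot
  have h_sqrt : (Real.sqrt 5 : ℂ) ^ 2 = (5 : ℚ) := by
    norm_cast; simp
  have h_tot : Nat.totient (2 * m) ≤ 4 := by
    rw [← hζ.natDegree_minpoly_rat (by omega)]
    exact natDegree_minpoly_le_four_of_sq_sub_mul_add_one_eq_zero h_sqrt hroot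
  have := Nat.le_twelve_of_totient_le_four h_tot
  omega
end
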